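/- For every shape parameter λ < 0, the Mills ratio of the skew normal distribution satisfies (1 + λ²) x · (1 - F_λ(x)) / f_λ(x) → 1 as x → ∞. -/

import Mathlib

open Real MeasureTheory Filter Topology

/-- Standard normal density. -/
noncomputable def stdPhi (x : ℝ) : ℝ := (Real.sqrt (2 * Real.pi))⁻¹ * Real.exp (-(x ^ 2) / 2)

/-- Standard normal cdf. -/
noncomputable def stdCdf (x : ℝ) : ℝ := ∫ t in Set.Iic x, stdPhi t

/-- Skew normal density with shape parameter l. -/
noncomputable def snPdf (l x : ℝ) : ℝ := 2 * stdPhi x * stdCdf (l * x)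

/-- Skew normal cdf with shape parameter l. -/
noncomputable def snCdf (l x : ℝ) : ℝ := ∫ t in Set.Iic x, snPdf l t

/-- Gumbel extreme value distribution function. -/
noncomputable def gumbel (x : ℝ) : ℝ := Real.exp (-Real.exp (-x))

/-!
The tail `1 - F_λ(x)` and `f_λ(x) / ((1 + λ²) x)` both tend to `0`, with derivatives `-f_λ(x)`
and `-f_λ(x) · snMillsFactor λ x`, so by l'Hôpital's rule it suffices that `snMillsFactor λ x → 1`.
With `u = λx`, this factor is `(1 + x² - u φ(u)/Φ(u)) / (x² + u²)`, and the Mills inequalities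
`u² Φ(u) ≤ -u φ(u) ≤ (1 + u²) Φ(u)` for `u ≤ 0` squeeze it between `1` and `1 + 2 / (x² + u²)`.
-/

open Set ProbabilityTheory

lemma stdPhi_eq_gaussianPDFReal : stdPhi = gaussianPDFReal 0 1 := by
  ext x; simp [stdPhi, gaussianPDFReal]

lemma stdPhi_pos (x : ℝ) : 0 < stdPhi x :=
  stdPhi_eq_gaussianPDFReal ▸ gaussianPDFReal_pos _ _ _ one_ne_zero

lemma integrable_stdPhi : Integrable stdPhi :=
  stdPhi_eq_gaussianPDFReal ▸ integrable_gaussianPDFReal 0 1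

lemma integral_stdPhi : ∫ x, stdPhi x = 1 := by
  rw [stdPhi_eq_gaussianPDFReal]; exact integral_gaussianPDFReal_eq_one 0 one_ne_zero

lemma stdPhi_neg (x : ℝ) : stdPhi (-x) = stdPhi x := by
  rw [stdPhi, stdPhi, neg_sq]

lemma continuous_stdPhi : Continuous stdPhi := by
  unfold stdPhi; fun_prop

lemma hasDerivAt_stdPhi (x : ℝ) : HasDerivAt stdPhi (-x * stdPhi x) x := by
  have h := (((hasDerivAt_pow 2 x).neg.div_const 2).exp).const_mul (√(2 * π))⁻¹
  refine h.congr_deriv ?_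
  simp only [stdPhi, Pi.neg_apply]
  ring

lemma tendsto_stdPhi_atTop : Tendsto stdPhi atTop (𝓝 0) := by
  have h : Tendsto (fun x : ℝ => -x ^ 2 / 2) atTop atBot :=
    (tendsto_neg_atTop_atBot.comp (tendsto_pow_atTop two_ne_zero)).atBot_div_const two_pos
  rw [← mul_zero (√(2 * π))⁻¹]
  exact (tendsto_exp_atBot.comp h).const_mul _

lemma tendsto_stdPhi_atBot : Tendsto stdPhi atBot (𝓝 0) := by
  simpa only [Function.comp_def, stdPhi_neg] using
    tendsto_stdPhi_atTop.comp tendsto_neg_atBot_atTop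

lemma stdCdf_eq_cdf : stdCdf = cdf (gaussianReal 0 1) := by
  ext x
  rw [cdf_eq_real, measureReal_def, gaussianReal_apply_eq_integral _ one_ne_zero,
    ENNReal.toReal_ofReal (setIntegral_nonneg measurableSet_Iic fun t _ =>
      gaussianPDFReal_nonneg _ _ t), stdCdf, stdPhi_eq_gaussianPDFReal]

lemma stdCdf_le_one (x : ℝ) : stdCdf x ≤ 1 := stdCdf_eq_cdf ▸ cdf_le_one _ x

lemma tendsto_stdCdf_atBot : Tendsto stdCdf atBot (𝓝 0) := stdCdf_eq_cdf ▸ tendsto_cdf_atBot _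

lemma stdCdf_pos (x : ℝ) : 0 < stdCdf x := by
  rw [stdCdf, setIntegral_pos_iff_support_of_nonneg_ae
    (.of_forall fun t => (stdPhi_pos t).le) integrable_stdPhi.integrableOn,
    Function.support_eq_univ fun t => (stdPhi_pos t).ne', univ_inter]
  simp

lemma stdCdf_neg (x : ℝ) : stdCdf (-x) = 1 - stdCdf x := by
  have h_total := intervalIntegral.integral_Iic_add_Ioi (b := x) integrable_stdPhi.integrableOn
    integrable_stdPhi.integrableOn
  rw [integral_stdPhi] at h_total
  have h_neg : stdCdf (-x) = ∫ t in Ioi x, stdPhi t := by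
    unfold stdCdf
    simpa only [stdPhi_neg, neg_neg] using integral_comp_neg_Iic (-x) stdPhi
  rw [h_neg, stdCdf]; linarith

lemma hasDerivAt_integral_Iic {E : Type*} [NormedAddCommGroup E] [NormedSpace ℝ E]
    [CompleteSpace E] {f : ℝ → E} (hf : Continuous f) (hfi : Integrable f) (x : ℝ) :
    HasDerivAt (fun y => ∫ t in Iic y, f t) (f x) x := by
  have h_eq : (fun y => ∫ t in Iic y, f t) =
      fun y => (∫ t in Iic 0, f t) + ∫ t in (0 : ℝ)..y, f t := by
    ext y
    rw [← intervalIntegral.integral_Iic_sub_Iic hfi.integrableOn hfi.integrableOn, add_sub_cancel]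
  rw [h_eq]
  exact (intervalIntegral.integral_hasDerivAt_right hfi.intervalIntegrable
    hf.aestronglyMeasurable.stronglyMeasurableAtFilter hf.continuousAt).const_add _

lemma hasDerivAt_stdCdf (x : ℝ) : HasDerivAt stdCdf (stdPhi x) x :=
  hasDerivAt_integral_Iic continuous_stdPhi integrable_stdPhi x

lemma continuous_stdCdf : Continuous stdCdf :=
  continuous_iff_continuousAt.2 fun x => (hasDerivAt_stdCdf x).continuousAt

lemma integrable_neg_mul_stdPhi : Integrable fun t => -t * stdPhi t := by
  refine ((integrable_mul_exp_neg_mul_sq (by norm_num : (0 : ℝ) < 1 / 2)).const_mul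
    (-(√(2 * π))⁻¹)).congr (.of_forall fun t => ?_)
  simp only [stdPhi]
  ring_nf

lemma integral_Iic_neg_mul_stdPhi (u : ℝ) : ∫ t in Iic u, -t * stdPhi t = stdPhi u := by
  simpa using integral_Iic_of_hasDerivAt_of_tendsto continuous_stdPhi.continuousWithinAt
    (fun t _ => hasDerivAt_stdPhi t) integrable_neg_mul_stdPhi.integrableOn tendsto_stdPhi_atBot

lemma neg_mul_stdCdf_le_stdPhi (u : ℝ) : -u * stdCdf u ≤ stdPhi u := by
  rw [stdCdf, ← integral_const_mul, ← integral_Iic_neg_mul_stdPhi]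
  refine setIntegral_mono_on (integrable_stdPhi.const_mul _).integrableOn
    integrable_neg_mul_stdPhi.integrableOn measurableSet_Iic
    fun t ht => mul_le_mul_of_nonneg_right (neg_le_neg ht) (stdPhi_pos t).le

lemma neg_mul_stdPhi_le_sq_add_one_mul_stdCdf (u : ℝ) :
    -u * stdPhi u ≤ (u ^ 2 + 1) * stdCdf u := by
  set N : ℝ → ℝ := fun x => stdCdf x + x * stdPhi x / (x ^ 2 + 1)
  have h_deriv (x : ℝ) : HasDerivAt N (2 * stdPhi x / (x ^ 2 + 1) ^ 2) x := by
    have h := (hasDerivAt_stdCdf x).add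
      (((hasDerivAt_id' x).mul (hasDerivAt_stdPhi x)).div
        (((hasDerivAt_pow 2 x).add_const 1)) (by positivity))
    refine h.congr_deriv ?_
    simp only [Pi.mul_apply]
    field_simp
    ring
  have h_mono : Monotone N := monotone_of_deriv_nonneg
    (fun x => (h_deriv x).differentiableAt) fun x => by
      rw [(h_deriv x).deriv]; have := stdPhi_pos x; positivity
  have h_lim : Tendsto N atBot (𝓝 0) := by
    have h_bound (x : ℝ) : ‖x * stdPhi x / (x ^ 2 + 1)‖ ≤ stdPhi x := by
      rw [norm_div, norm_mul, Real.norm_of_nonneg (stdPhi_pos x).le,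
        Real.norm_of_nonneg (by positivity : (0 : ℝ) ≤ x ^ 2 + 1), div_le_iff₀ (by positivity)]
      have h_abs : ‖x‖ ≤ x ^ 2 + 1 := by
        rw [Real.norm_eq_abs]; nlinarith [sq_abs x, sq_nonneg (|x| - 1)]
      nlinarith [stdPhi_pos x]
    simpa using tendsto_stdCdf_atBot.add (squeeze_zero_norm h_bound tendsto_stdPhi_atBot)
  have h_nonneg : 0 ≤ N u := h_mono.le_of_tendsto h_lim u
  simp only [N] at h_nonneg
  field_simp at h_nonneg
  linarith

section SkewNormal

variable (l : ℝ)

lemma snPdf_pos (x : ℝ) : 0 < snPdf l x :=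
  mul_pos (mul_pos two_pos (stdPhi_pos x)) (stdCdf_pos _)

lemma snPdf_le (x : ℝ) : snPdf l x ≤ 2 * stdPhi x :=
  mul_le_of_le_one_right (by have := stdPhi_pos x; positivity) (stdCdf_le_one _)

lemma continuous_snPdf : Continuous (snPdf l) :=
  (continuous_const.mul continuous_stdPhi).mul (continuous_stdCdf.comp (continuous_const_mul l))

lemma integrable_snPdf : Integrable (snPdf l) :=
  (integrable_stdPhi.const_mul 2).mono' (continuous_snPdf l).aestronglyMeasurable
    (.of_forall fun x => by rw [Real.norm_of_nonneg (snPdf_pos l x).le]; exact snPdf_le l x)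

lemma snPdf_neg_add (x : ℝ) : snPdf l (-x) + snPdf l x = 2 * stdPhi x := by
  rw [snPdf, snPdf, stdPhi_neg, mul_neg, stdCdf_neg]
  ring

lemma integral_snPdf : ∫ x, snPdf l x = 1 := by
  have h := integral_add (integrable_snPdf l).comp_neg (integrable_snPdf l)
  rw [integral_neg_eq_self, funext (snPdf_neg_add l), integral_const_mul, integral_stdPhi] at h
  linarith

lemma hasDerivAt_snCdf (x : ℝ) : HasDerivAt (snCdf l) (snPdf l x) x :=
  hasDerivAt_integral_Iic (continuous_snPdf l) (integrable_snPdf l) x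

lemma tendsto_snCdf_atTop : Tendsto (snCdf l) atTop (𝓝 1) := by
  have h := tendsto_setIntegral_of_monotone (fun x => measurableSet_Iic)
    (fun _ _ => Iic_subset_Iic.2) (integrable_snPdf l).integrableOn
  rwa [iUnion_Iic, setIntegral_univ, integral_snPdf] at h

lemma hasDerivAt_snPdf (x : ℝ) :
    HasDerivAt (snPdf l) (-x * snPdf l x + 2 * l * stdPhi x * stdPhi (l * x)) x := by
  have h := ((hasDerivAt_stdPhi x).const_mul 2).mul
    ((hasDerivAt_stdCdf (l * x)).comp x ((hasDerivAt_id x).const_mul l))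
  refine h.congr_deriv ?_
  simp only [snPdf, Function.comp_apply]
  ring

lemma tendsto_snPdf_atTop : Tendsto (snPdf l) atTop (𝓝 0) := by
  refine squeeze_zero (fun x => (snPdf_pos l x).le) (snPdf_le l) ?_
  simpa using tendsto_stdPhi_atTop.const_mul 2

/-- The quotient `-(d/dx)(f_λ(x) / ((1 + λ²) x)) / f_λ(x)`. -/
noncomputable def snMillsFactor (l x : ℝ) : ℝ :=
  (1 + x ^ 2 - l * x * (stdPhi (l * x) / stdCdf (l * x))) / ((1 + l ^ 2) * x ^ 2)

lemma hasDerivAt_snPdf_div {x : ℝ} (hx : x ≠ 0) :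
    HasDerivAt (fun t => snPdf l t / ((1 + l ^ 2) * t))
      (-(snPdf l x * snMillsFactor l x)) x := by
  have h := (hasDerivAt_snPdf l x).div ((hasDerivAt_id x).const_mul (1 + l ^ 2))
    (by positivity)
  refine h.congr_deriv ?_
  rw [snMillsFactor]
  set r := stdPhi (l * x) / stdCdf (l * x)
  have h_ratio : stdPhi (l * x) = stdCdf (l * x) * r :=
    (mul_div_cancel₀ _ (stdCdf_pos _).ne').symm
  simp only [snPdf, id, h_ratio]
  field_simp
  ring

lemma snMillsFactor_mem_Icc {x : ℝ} (hl : l ≤ 0) (hx : 0 < x) :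
    snMillsFactor l x ∈ Icc 1 (1 + 2 / ((1 + l ^ 2) * x ^ 2)) := by
  rw [snMillsFactor, mem_Icc]
  set u := l * x
  have hu : u ≤ 0 := mul_nonpos_of_nonpos_of_nonneg hl hx.le
  have hΦ := stdCdf_pos u
  have h_lower : u ^ 2 ≤ -u * (stdPhi u / stdCdf u) := by
    rw [← mul_div_assoc, le_div_iff₀ hΦ]
    nlinarith [neg_mul_stdCdf_le_stdPhi u]
  have h_upper : -u * (stdPhi u / stdCdf u) ≤ u ^ 2 + 1 := by
    rw [← mul_div_assoc, div_le_iff₀ hΦ]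
    exact neg_mul_stdPhi_le_sq_add_one_mul_stdCdf u
  have h_denom : (1 + l ^ 2) * x ^ 2 = x ^ 2 + u ^ 2 := by ring
  have h_pos : 0 < x ^ 2 + u ^ 2 := by positivity
  rw [h_denom, one_add_div h_pos.ne', le_div_iff₀ h_pos, div_le_div_iff_of_pos_right h_pos]
  constructor <;> linarith

lemma tendsto_snMillsFactor_atTop (hl : l ≤ 0) : Tendsto (snMillsFactor l) atTop (𝓝 1) := by
  have h_upper : Tendsto (fun x : ℝ => 1 + 2 / ((1 + l ^ 2) * x ^ 2)) atTop (𝓝 1) := by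
    simpa using tendsto_const_nhds.add <| tendsto_const_nhds.div_atTop <|
      (tendsto_pow_atTop two_ne_zero).const_mul_atTop (by positivity : (0 : ℝ) < 1 + l ^ 2)
  refine tendsto_of_tendsto_of_tendsto_of_le_of_le' tendsto_const_nhds h_upper ?_ ?_ <;>
    filter_upwards [eventually_gt_atTop 0] with x hx
  exacts [(snMillsFactor_mem_Icc l hl hx).1, (snMillsFactor_mem_Icc l hl hx).2]

end SkewNormal

theorem skew_normal_mills_ratio_neg (l : ℝ) (hl : l < 0) :
    Tendsto (fun x : ℝ => (1 + l ^ 2) * x * (1 - snCdf l x) / snPdf l x) atTop (𝓝 1) := by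
  have h_lhopital : Tendsto (fun x => (1 - snCdf l x) / (snPdf l x / ((1 + l ^ 2) * x)))
      atTop (𝓝 1) := by
    refine HasDerivAt.lhopital_zero_atTop (.of_forall fun x => (hasDerivAt_snCdf l x).const_sub 1)
      ((eventually_ne_atTop 0).mono fun x hx => hasDerivAt_snPdf_div l hx) ?_
      (by simpa using (tendsto_snCdf_atTop l).const_sub 1)
      ((tendsto_snPdf_atTop l).div_atTop (tendsto_id.const_mul_atTop (by positivity))) ?_
    · filter_upwards [eventually_gt_atTop 0] with x hx
      exact neg_ne_zero.2 (mul_pos (snPdf_pos l x)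
        (one_pos.trans_le (snMillsFactor_mem_Icc l hl.le hx).1)).ne'
    · have h_inv := (tendsto_snMillsFactor_atTop l hl.le).inv₀ one_ne_zero
      rw [inv_one] at h_inv
      refine h_inv.congr fun x => ?_
      rw [neg_div_neg_eq, div_mul_cancel_left₀ (snPdf_pos l x).ne']
  refine h_lhopital.congr fun x => ?_
  rw [div_div_eq_mul_div]
  ring
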